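/- Semantic characterization of normalization, converse direction: in the model E, if Γ ⊢_E M : α with ∅ ∉⁺ α and ∅ ∉⁻ Γ, then M has a β-normal form. -/

import Mathlib

/-- Untyped λ⊥-terms in de Bruijn notation, intrinsically scoped:
`Tm n` is the set of λ⊥-terms with free variables among `x₀,…,x_{n-1}`. -/
inductive Tm : ℕ → Type
  | var : ∀ {n : ℕ}, Fin n → Tm n
  | lam : ∀ {n : ℕ}, Tm (n + 1) → Tm n
  | app : ∀ {n : ℕ}, Tm n → Tm n → Tm n
  | bot : ∀ {n : ℕ}, Tm n

/-- Renaming of free variables. -/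
def Tm.rename : ∀ {n m : ℕ}, (Fin n → Fin m) → Tm n → Tm m
  | _, _, f, .var k => .var (f k)
  | _, m, f, .lam t =>
      .lam (t.rename fun k => Fin.cases (motive := fun _ => Fin (m + 1)) 0
        (fun j => (f j).succ) k)
  | _, _, f, .app t u => .app (t.rename f) (u.rename f)
  | _, _, _, .bot => .bot

/-- Simultaneous (capture-avoiding) substitution. -/
def Tm.subst : ∀ {n m : ℕ}, (Fin n → Tm m) → Tm n → Tm m
  | _, _, σ, .var k => σ k
  | _, m, σ, .lam t =>
      .lam (t.subst fun k => Fin.cases (motive := fun _ => Tm (m + 1)) (.var 0)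
        (fun j => (σ j).rename Fin.succ) k)
  | _, _, σ, .app t u => .app (t.subst σ) (u.subst σ)
  | _, _, _, .bot => .bot

/-- Substitution `M{N/y}` of `N` for the 0-th free variable of `M`. -/
def Tm.subst1 {n : ℕ} (M : Tm (n + 1)) (N : Tm n) : Tm n :=
  M.subst (Fin.cases (motive := fun _ => Tm n) N Tm.var)

/-- One-step β-reduction (contextual closure of `(λx.M)N → M{N/x}`). -/
inductive Beta : ∀ {n : ℕ}, Tm n → Tm n → Prop
  | redex {n} (M : Tm (n + 1)) (N : Tm n) : Beta (.app (.lam M) N) (M.subst1 N)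
  | appL {n} {M M' N : Tm n} : Beta M M' → Beta (.app M N) (.app M' N)
  | appR {n} {M N N' : Tm n} : Beta N N' → Beta (.app M N) (.app M N')
  | lam {n} {M M' : Tm (n + 1)} : Beta M M' → Beta (.lam M) (.lam M')

/-- A λ⊥-term is a λ-term when it contains no occurrence of `⊥`. -/
def BotFree : ∀ {n : ℕ}, Tm n → Prop
  | _, .var _ => True
  | _, .lam M => BotFree M
  | _, .app M N => BotFree M ∧ BotFree N
  | _, .bot => False

/-- The environment assigning the multiset `[α]` to the variable `k` and `0` elsewhere. -/
def single {D : Type} {n : ℕ} (k : Fin n) (α : D) : Fin n → Multiset D :=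
  fun j => if j = k then {α} else 0

/-- The relational interpretation `⟦M⟧_{x̄} ⊆ M_f(D)ⁿ × D` of a λ⊥-term in a relational
graph model `(D, i)`. -/
def Interp {D : Type} (i : Multiset D × D → D) :
    ∀ {n : ℕ}, Tm n → Set ((Fin n → Multiset D) × D)
  | _, .var k => {p | ∃ α, p = (single k α, α)}
  | _, .lam M => {p | ∃ Γ a α, (Fin.cons a Γ, α) ∈ Interp i M ∧ p = (Γ, i (a, α))}
  | n, .app M N =>
      {p | ∃ (Γ₀ : Fin n → Multiset D) (l : List ((Fin n → Multiset D) × D)),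
        (Γ₀, i (↑(l.map Prod.snd), p.2)) ∈ Interp i M ∧
        (∀ q ∈ l, q ∈ Interp i N) ∧ p.1 = Γ₀ + (l.map Prod.fst).sum}
  | _, .bot => ∅

/-- The non-idempotent intersection type system associated with a relational graph model
`(D, i)`: `Der i Γ M α m` states that the judgment `Γ ⊢ M : α` is derivable by a
derivation `π` with `#app(π) = m` occurrences of the application rule. -/
inductive Der {D : Type} (i : Multiset D × D → D) :
    ∀ {n : ℕ}, (Fin n → Multiset D) → Tm n → D → ℕ → Prop
  | var {n} (k : Fin n) (α : D) : Der i (single k α) (.var k) α 0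
  | lam {n} {Γ : Fin n → Multiset D} {a : Multiset D} {M : Tm (n + 1)} {α : D} {m : ℕ} :
      Der i (Fin.cons a Γ) M α m → Der i Γ (.lam M) (i (a, α)) m
  | app {n} {Γ : Fin n → Multiset D} {M N : Tm n} {α : D} {m : ℕ}
      (l : List ((Fin n → Multiset D) × D × ℕ)) :
      Der i Γ M (i (↑(l.map fun q => q.2.1), α)) m →
      (∀ q ∈ l, Der i q.1 N q.2.1 q.2.2) →
      Der i (Γ + (l.map fun q => q.1).sum) (.app M N) α
        (m + (l.map fun q => q.2.2).sum + 1)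

/-- Pre-types of the relational graph model `E`, the free completion of the partial pair
`(ℕ, ∅)`: atoms `ξ_k` and arrows `a → α` with `a` a finite multiset of pre-types
(represented as a list). -/
inductive PreE : Type
  | atom : ℕ → PreE
  | node : List PreE → PreE → PreE

/-- Permutation congruence on pre-types: lists represent finite multisets. -/
inductive EqvE : PreE → PreE → Prop
  | refl (t) : EqvE t t
  | symm {s t} : EqvE s t → EqvE t s
  | trans {s t u} : EqvE s t → EqvE t u → EqvE s u
  | perm {l₁ l₂ t} : List.Perm l₁ l₂ → EqvE (.node l₁ t) (.node l₂ t)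
  | congHead {l t₁ t₂} : EqvE t₁ t₂ → EqvE (.node l t₁) (.node l t₂)
  | congArg {x y l t} : EqvE x y → EqvE (.node (x :: l) t) (.node (y :: l) t)

def ESetoid : Setoid PreE := ⟨EqvE, ⟨EqvE.refl, EqvE.symm, EqvE.trans⟩⟩

/-- The set of elements (types) of the model `E`. -/
def ETy : Type := Quotient ESetoid

/-- The (injective) arrow constructor `i : M_f(E) × E → E` of the model `E`. -/
noncomputable def arrE (p : Multiset ETy × ETy) : ETy :=
  Quotient.mk ESetoid (PreE.node (p.1.toList.map Quotient.out) p.2.out)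

/-- Polarized occurrences of the empty multiset in a pre-type: `Occ true` is a positive
occurrence, `Occ false` a negative one.  The empty multiset occurs negatively in
`∅ → β`; occurrences in the target of an arrow keep their polarity; occurrences in a
member of the source multiset of an arrow flip their polarity. -/
inductive Occ : Bool → PreE → Prop
  | negEmpty (t) : Occ false (.node [] t)
  | tail {p l t} : Occ p t → Occ p (.node l t)
  | arg {p β l t} : Occ (!p) β → β ∈ l → Occ p (.node l t)

/-- Polarized occurrences of the empty multiset in an element of `E`. -/
def OccQ (p : Bool) (x : ETy) : Prop := ∃ t : PreE, x = Quotient.mk ESetoid t ∧ Occ p t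

/-!
Weight a typing derivation by its number `m` of application rules. Since the arrow constructor of
`E` is injective, a typed head redex `(λx.R) Q` comes from a typing of `R` whose multiset `a`
for `x` is exactly the multiset of types given to `Q`; substituting one derivation of `Q` for
each occurrence in `a` types `R{Q/x}` with the same environment and type and with fewer
application rules. So head reduction of a typed term terminates, in a head normal form
`λx̄. y M₁ ⋯ Mₖ`. The type of `y` comes from the environment, where `∅` has no negative
occurrence; hence every argument multiset of that arrow type is nonempty and has no positive
occurrence of `∅`, so each `Mⱼ` is typed by a strictly smaller derivation meeting the polarity
conditions, and normalizes by induction on `m`.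
-/

section Environments

variable {D : Type} {n m : ℕ}

lemma cons_add_cons (a b : Multiset D) (Γ Δ : Fin n → Multiset D) :
    (Fin.cons a Γ + Fin.cons b Δ : Fin (n + 1) → Multiset D) = Fin.cons (a + b) (Γ + Δ) :=
  Matrix.cons_add_cons a Γ b Δ

lemma cons_zero_zero : (Fin.cons 0 0 : Fin (n + 1) → Multiset D) = 0 :=
  Matrix.cons_zero_zero

lemma single_eq_pi_single (k : Fin n) (α : D) : single k α = Pi.single k {α} := by
  funext j
  simp [single, Pi.single_apply]

lemma single_succ (k : Fin n) (α : D) :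
    (single k.succ α : Fin (n + 1) → Multiset D) = Fin.cons 0 (single k α) := by
  funext j
  refine Fin.cases ?_ (fun j => ?_) j <;> simp [single, eq_comm (a := (0 : Fin (n + 1)))]

lemma single_zero (α : D) : (single 0 α : Fin (n + 1) → Multiset D) = Fin.cons {α} 0 := by
  funext j
  refine Fin.cases ?_ (fun j => ?_) j <;> simp [single]

lemma cons_add_single_zero (a : Multiset D) (Γ : Fin n → Multiset D) (α : D) :
    (Fin.cons a Γ + single 0 α : Fin (n + 1) → Multiset D) = Fin.cons (α ::ₘ a) Γ := by
  rw [single_zero, cons_add_cons, add_zero, add_comm a, Multiset.singleton_add]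

lemma exists_eq_add_single {Γ : Fin n → Multiset D} {k : Fin n} {α : D} (h : α ∈ Γ k) :
    ∃ Γ', Γ = Γ' + single k α := by
  classical
  refine ⟨Function.update Γ k ((Γ k).erase α), funext fun j => ?_⟩
  by_cases hj : j = k
  · subst hj
    simp only [single, Function.update_self, Pi.add_apply, if_true]
    rw [add_comm, Multiset.singleton_add, Multiset.cons_erase h]
  · simp [single, hj]

theorem env_induction {P : (Fin n → Multiset D) → Prop} (zero : P 0)
    (add_single : ∀ Γ k α, P Γ → P (Γ + single k α)) (Γ : Fin n → Multiset D) : P Γ := by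
  suffices ∀ Δ Γ, P Γ → P (Γ + Δ) by simpa using this Γ 0 zero
  intro Δ
  rw [← Finset.univ_sum_single Δ]
  refine Finset.sum_induction _ (fun Δ => ∀ Γ, P Γ → P (Γ + Δ))
    (fun Δ₁ Δ₂ h₁ h₂ Γ hΓ => add_assoc Γ Δ₁ Δ₂ ▸ h₂ _ (h₁ _ hΓ)) (by simp) fun k _ => ?_
  induction Δ k using Multiset.induction with
  | empty => simp
  | cons α a ih =>
    intro Γ hΓ
    rw [← Multiset.singleton_add, add_comm {α} a, Pi.single_add, ← single_eq_pi_single, ← add_assoc]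
    exact add_single _ _ _ (ih Γ hΓ)

def envMap (f : Fin n → Fin m) : (Fin n → Multiset D) →+ (Fin m → Multiset D) where
  toFun Γ := ∑ k, Pi.single (f k) (Γ k)
  map_zero' := by simp
  map_add' Γ Δ := by simp [Pi.single_add, Finset.sum_add_distrib]

lemma envMap_apply (f : Fin n → Fin m) (Γ : Fin n → Multiset D) :
    envMap f Γ = ∑ k, Pi.single (f k) (Γ k) := rfl

lemma envMap_single (f : Fin n → Fin m) (k : Fin n) (α : D) :
    envMap f (single k α) = single (f k) α := by
  rw [envMap_apply, Finset.sum_eq_single k] <;> simp_all [single_eq_pi_single]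

lemma envMap_succ (Γ : Fin n → Multiset D) : envMap Fin.succ Γ = Fin.cons 0 Γ := by
  funext j
  refine Fin.cases ?_ (fun j => ?_) j <;>
    simp [envMap_apply, Pi.single_apply, Finset.sum_apply, Fin.succ_ne_zero]

lemma envMap_lift (f : Fin n → Fin m) (a : Multiset D) (Γ : Fin n → Multiset D) :
    envMap (fun k => Fin.cases (motive := fun _ => Fin (m + 1)) 0 (fun j => (f j).succ) k)
      (Fin.cons a Γ) = Fin.cons a (envMap f Γ) := by
  funext j
  refine Fin.cases ?_ (fun j => ?_) j <;>
    simp [envMap_apply, Fin.sum_univ_succ, Pi.single_apply, Finset.sum_apply, Fin.succ_ne_zero,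
      (Fin.succ_ne_zero _).symm]

end Environments

section Typing

variable {D : Type} {i : Multiset D × D → D} {n n' : ℕ}

theorem Der.rename {Γ : Fin n → Multiset D} {M : Tm n} {α : D} {m : ℕ}
    (h : Der i Γ M α m) (f : Fin n → Fin n') : Der i (envMap f Γ) (M.rename f) α m := by
  induction h generalizing n' with
  | var k α => rw [envMap_single]; exact Der.var (f k) α
  | lam _ ih =>
    have := ih (fun k => Fin.cases (motive := fun _ => Fin (n' + 1)) 0 (fun j => (f j).succ) k)
    rw [envMap_lift] at this
    exact Der.lam this
  | app l _ _ ihM ihN =>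
    have := Der.app (l.map fun q => (envMap f q.1, q.2.1, q.2.2))
      (by simpa [Function.comp_def] using ihM f)
      (fun _ hq => by obtain ⟨q, hq', rfl⟩ := List.mem_map.mp hq; exact ihN q hq' f)
    simpa [Tm.rename, map_list_sum, Function.comp_def] using this

/-- `Ders i σ Δ Γ p`: for every variable `k` and every occurrence of `β` in `Γ k`, a derivation
of `σ k : β`; `Δ` is the sum of their environments and `p` the sum of their measures. -/
inductive Ders (i : Multiset D × D → D) (σ : Fin n → Tm n') :
    (Fin n' → Multiset D) → (Fin n → Multiset D) → ℕ → Prop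
  | nil : Ders i σ 0 0 0
  | cons {Δ Γ p k β Δ' p'} : Der i Δ' (σ k) β p' → Ders i σ Δ Γ p →
      Ders i σ (Δ + Δ') (Γ + single k β) (p + p')

namespace Ders

variable {σ : Fin n → Tm n'}

lemma add {Δ₁ Δ₂ : Fin n' → Multiset D} {Γ₁ Γ₂ : Fin n → Multiset D} {p₁ p₂ : ℕ}
    (h₁ : Ders i σ Δ₁ Γ₁ p₁) (h₂ : Ders i σ Δ₂ Γ₂ p₂) :
    Ders i σ (Δ₁ + Δ₂) (Γ₁ + Γ₂) (p₁ + p₂) := by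
  induction h₂ with
  | nil => simpa using h₁
  | cons hd _ ih => simpa [add_assoc] using ih.cons hd

lemma zero_inv {Δ : Fin n' → Multiset D} {p : ℕ} (h : Ders i σ Δ 0 p) :
    Δ = 0 ∧ p = 0 := by
  generalize hΓ : (0 : Fin n → Multiset D) = Γ at h
  cases h with
  | nil => exact ⟨rfl, rfl⟩
  | @cons _ _ _ k => simpa [single] using (congrFun hΓ k).symm

lemma single_inv {Δ : Fin n' → Multiset D} {k : Fin n} {α : D} {p : ℕ}
    (h : Ders i σ Δ (single k α) p) : Der i Δ (σ k) α p := by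
  generalize hΓ : single k α = Γ at h
  cases h with
  | nil => simpa [single] using congrFun hΓ k
  | @cons Δ₀ Γ₀ p₀ k' β Δ' p' hd hs =>
    obtain rfl : k' = k := by
      by_contra hne
      simpa [single, hne] using (congrFun hΓ k').symm
    obtain rfl : β = α := by
      have : β ∈ (Γ₀ + single k' β) k' := by simp [single]
      rw [← hΓ] at this
      simpa [single] using this
    obtain rfl : Γ₀ = 0 := add_eq_right.mp hΓ.symm
    obtain ⟨rfl, rfl⟩ := hs.zero_inv
    simpa using hd

lemma split {Δ : Fin n' → Multiset D} {Γ : Fin n → Multiset D} {p : ℕ}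
    (h : Ders i σ Δ Γ p) {Γ₁ Γ₂ : Fin n → Multiset D} (hΓ : Γ = Γ₁ + Γ₂) :
    ∃ Δ₁ Δ₂ p₁ p₂, Ders i σ Δ₁ Γ₁ p₁ ∧ Ders i σ Δ₂ Γ₂ p₂ ∧ Δ = Δ₁ + Δ₂ ∧ p = p₁ + p₂ := by
  induction h generalizing Γ₁ Γ₂ with
  | nil =>
    obtain ⟨rfl, rfl⟩ := add_eq_zero.mp hΓ.symm
    exact ⟨0, 0, 0, 0, nil, nil, by simp, rfl⟩
  | @cons Δ Γ p k β Δ' p' hd _ ih =>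
    wlog hβ : β ∈ Γ₁ k generalizing Γ₁ Γ₂
    · have hβ₂ : β ∈ Γ₂ k := by
        have : β ∈ (Γ₁ + Γ₂) k := hΓ ▸ by simp [single]
        simpa [hβ] using this
      obtain ⟨Δ₂, Δ₁, p₂, p₁, h₂, h₁, hΔ, hp⟩ := this (hΓ.trans (add_comm _ _)) hβ₂
      exact ⟨Δ₁, Δ₂, p₁, p₂, h₁, h₂, hΔ.trans (add_comm _ _), hp.trans (add_comm _ _)⟩
    obtain ⟨Γ₁, rfl⟩ := exists_eq_add_single hβ
    obtain ⟨Δ₁, Δ₂, p₁, p₂, h₁, h₂, rfl, rfl⟩ :=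
      ih (add_right_cancel (b := single k β) (hΓ.trans (add_right_comm _ _ _)))
    exact ⟨Δ₁ + Δ', Δ₂, p₁ + p', p₂, h₁.cons hd, h₂, add_right_comm _ _ _, by omega⟩

lemma lift {Δ : Fin n' → Multiset D} {Γ : Fin n → Multiset D} {p : ℕ} (h : Ders i σ Δ Γ p) :
    Ders i (fun k => Fin.cases (motive := fun _ => Tm (n' + 1)) (.var 0)
        (fun j => (σ j).rename Fin.succ) k)
      (Fin.cons 0 Δ) (Fin.cons 0 Γ) p := by
  induction h with
  | nil => rw [cons_zero_zero, cons_zero_zero]; exact nil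
  | @cons Δ Γ p k β Δ' p' hd _ ih =>
    have hd' := hd.rename Fin.succ
    rw [envMap_succ] at hd'
    have := ih.cons (k := k.succ) hd'
    rwa [cons_add_cons, single_succ, cons_add_cons, zero_add] at this

lemma add_cons_var {σ : Fin (n + 1) → Tm (n' + 1)} {Δ : Fin (n' + 1) → Multiset D}
    {Γ : Fin (n + 1) → Multiset D} {p : ℕ} (h : Ders i σ Δ Γ p) (hσ : σ 0 = .var 0)
    (a : Multiset D) :
    Ders i σ (Δ + Fin.cons a 0) (Γ + Fin.cons a 0) p := by
  induction a using Multiset.induction with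
  | empty => simpa [cons_zero_zero] using h
  | cons β a ih =>
    have := ih.cons (hσ ▸ Der.var 0 β)
    rwa [add_assoc, add_assoc, cons_add_single_zero, cons_add_single_zero, add_zero] at this

lemma subst1_vars (N : Tm n) (Γ : Fin n → Multiset D) :
    Ders i (Fin.cases (motive := fun _ => Tm n) N Tm.var) Γ (Fin.cons 0 Γ) 0 := by
  induction Γ using env_induction with
  | zero => rw [cons_zero_zero]; exact nil
  | add_single Γ k β ih =>
    simpa [single_succ, cons_add_cons] using ih.cons (k := k.succ) (Der.var k β)

lemma subst1_arg {N : Tm n} (l : List ((Fin n → Multiset D) × D × ℕ))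
    (hl : ∀ q ∈ l, Der i q.1 N q.2.1 q.2.2) :
    Ders i (Fin.cases (motive := fun _ => Tm n) N Tm.var) (l.map fun q => q.1).sum
      (Fin.cons ↑(l.map fun q => q.2.1) 0) (l.map fun q => q.2.2).sum := by
  induction l with
  | nil =>
    simp only [List.map_nil, List.sum_nil, Multiset.coe_nil, cons_zero_zero]
    exact nil
  | cons q l ih =>
    have := (ih fun q hq => hl q (List.mem_cons_of_mem _ hq)).cons (k := 0)
      (hl q List.mem_cons_self)
    rw [cons_add_single_zero] at this
    simpa [add_comm] using this

end Ders

lemma Ders.exists_list_subst {σ : Fin n → Tm n'} {N : Tm n}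
    (l : List ((Fin n → Multiset D) × D × ℕ))
    (hl : ∀ q ∈ l, ∀ {Δ : Fin n' → Multiset D} {p : ℕ},
      Ders i σ Δ q.1 p → Der i Δ (N.subst σ) q.2.1 (q.2.2 + p))
    {Δ : Fin n' → Multiset D} {p : ℕ} (hσ : Ders i σ Δ (l.map fun q => q.1).sum p) :
    ∃ l' : List ((Fin n' → Multiset D) × D × ℕ),
      l'.map (fun q => q.2.1) = l.map (fun q => q.2.1) ∧
      (∀ q ∈ l', Der i q.1 (N.subst σ) q.2.1 q.2.2) ∧
      (l'.map fun q => q.1).sum = Δ ∧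
      (l'.map fun q => q.2.2).sum = (l.map fun q => q.2.2).sum + p := by
  induction l generalizing Δ p with
  | nil =>
    obtain ⟨rfl, rfl⟩ := hσ.zero_inv
    exact ⟨[], rfl, by simp, rfl, rfl⟩
  | cons q l ih =>
    obtain ⟨Δq, Δl, pq, pl, hq, hσl, rfl, rfl⟩ := hσ.split List.sum_cons
    obtain ⟨l', hty, hl', rfl, hp⟩ := ih (fun q hq => hl q (List.mem_cons_of_mem _ hq)) hσl
    refine ⟨(Δq, q.2.1, q.2.2 + pq) :: l', by simp [hty], ?_, rfl, ?_⟩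
    · exact List.forall_mem_cons.mpr ⟨hl q List.mem_cons_self hq, hl'⟩
    · simp only [List.map_cons, List.sum_cons, hp]
      omega

theorem Der.subst {Γ : Fin n → Multiset D} {M : Tm n} {α : D} {m : ℕ}
    (h : Der i Γ M α m) {σ : Fin n → Tm n'} {Δ : Fin n' → Multiset D} {p : ℕ}
    (hσ : Ders i σ Δ Γ p) : Der i Δ (M.subst σ) α (m + p) := by
  induction h generalizing n' Δ p with
  | var k α => simpa [Tm.subst] using hσ.single_inv
  | @lam _ _ a _ _ _ _ ih =>
    have := hσ.lift.add_cons_var rfl a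
    simp only [cons_add_cons, zero_add, add_zero] at this
    exact Der.lam (ih this)
  | app l _ _ ihM ihN =>
    obtain ⟨Δ₀, Δl, p₀, pl, h₀, hl, rfl, rfl⟩ := hσ.split rfl
    obtain ⟨l', hty, hl', rfl, hp⟩ := Ders.exists_list_subst l (fun q hq => ihN q hq) hl
    simp only [Tm.subst]
    convert Der.app l' (hty ▸ ihM h₀) hl' using 1
    rw [hp]; omega

theorem Der.subst1 {Γ : Fin n → Multiset D} {M : Tm (n + 1)} {N : Tm n} {α : D} {m : ℕ}
    (l : List ((Fin n → Multiset D) × D × ℕ))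
    (h : Der i (Fin.cons ↑(l.map fun q => q.2.1) Γ) M α m)
    (hl : ∀ q ∈ l, Der i q.1 N q.2.1 q.2.2) :
    Der i (Γ + (l.map fun q => q.1).sum) (M.subst1 N) α (m + (l.map fun q => q.2.2).sum) := by
  have := (Ders.subst1_vars N Γ).add (Ders.subst1_arg l hl)
  rw [cons_add_cons, zero_add, add_zero, zero_add] at this
  exact h.subst this

theorem Der.subst1_of_app_lam (hi : Function.Injective i) {Γ : Fin n → Multiset D}
    {R : Tm (n + 1)} {Q : Tm n} {α : D} {m : ℕ} (h : Der i Γ (.app (.lam R) Q) α m) :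
    ∃ m' < m, Der i Γ (R.subst1 Q) α m' := by
  cases h with
  | app l hP hQ =>
    generalize hT : i _ = T at hP
    cases hP with
    | lam hR =>
      obtain ⟨rfl, rfl⟩ := Prod.ext_iff.mp (hi hT)
      exact ⟨_, by omega, hR.subst1 l hQ⟩

end Typing

section ModelE

lemma occ_node_iff {p : Bool} {l : List PreE} {t : PreE} :
    Occ p (.node l t) ↔ (p = false ∧ l = []) ∨ Occ p t ∨ ∃ β ∈ l, Occ (!p) β := by
  constructor
  · rintro (_ | h | ⟨h, hm⟩)
    · exact .inl ⟨rfl, rfl⟩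
    · exact .inr (.inl h)
    · exact .inr (.inr ⟨_, hm, h⟩)
  · rintro (⟨rfl, rfl⟩ | h | ⟨β, hm, h⟩)
    · exact .negEmpty t
    · exact .tail h
    · exact .arg h hm

lemma EqvE.occ_iff {s t : PreE} (h : EqvE s t) (p : Bool) : Occ p s ↔ Occ p t := by
  induction h generalizing p with
  | refl => rfl
  | symm _ ih => exact (ih p).symm
  | trans _ _ ih₁ ih₂ => exact (ih₁ p).trans (ih₂ p)
  | perm hp =>
    rw [occ_node_iff, occ_node_iff, ← List.length_eq_zero_iff, hp.length_eq,
      List.length_eq_zero_iff]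
    simp only [hp.mem_iff]
  | congHead _ ih => rw [occ_node_iff, occ_node_iff, ih]
  | congArg _ ih => simp [occ_node_iff, ih]

lemma occQ_mk {p : Bool} {t : PreE} : OccQ p (Quotient.mk ESetoid t) ↔ Occ p t :=
  ⟨fun ⟨_, ht, h⟩ => ((Quotient.exact ht.symm : EqvE _ _).occ_iff p).mp h, fun h => ⟨t, rfl, h⟩⟩

lemma occQ_arrE_iff {p : Bool} {a : Multiset ETy} {α : ETy} :
    OccQ p (arrE (a, α)) ↔ (p = false ∧ a = 0) ∨ OccQ p α ∨ ∃ β ∈ a, OccQ (!p) β := by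
  have out_iff (q : Bool) (β : ETy) : Occ q β.out ↔ OccQ q β := by
    conv_rhs => rw [← β.out_eq]
    exact occQ_mk.symm
  have nil_iff : a.toList.map Quotient.out = [] ↔ a = 0 :=
    List.map_eq_nil_iff.trans Multiset.toList_eq_nil
  have exists_iff : (∃ β ∈ a.toList.map Quotient.out, Occ (!p) β) ↔ ∃ β ∈ a, OccQ (!p) β := by
    constructor
    · rintro ⟨_, hm, h⟩
      obtain ⟨β, hβ, rfl⟩ := List.mem_map.mp hm
      exact ⟨β, Multiset.mem_toList.mp hβ, (out_iff _ β).mp h⟩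
    · rintro ⟨β, hβ, h⟩
      exact ⟨β.out, List.mem_map.mpr ⟨β, Multiset.mem_toList.mpr hβ, rfl⟩, (out_iff _ β).mpr h⟩
  show OccQ p (Quotient.mk ESetoid (.node (a.toList.map Quotient.out) α.out)) ↔ _
  rw [occQ_mk, occ_node_iff, nil_iff, out_iff, exists_iff]

lemma not_occQ_true_arrE {a : Multiset ETy} {α : ETy} (h : ¬ OccQ true (arrE (a, α))) :
    ¬ OccQ true α ∧ ∀ β ∈ a, ¬ OccQ false β := by
  simpa [occQ_arrE_iff] using h

lemma not_occQ_false_arrE {a : Multiset ETy} {α : ETy} (h : ¬ OccQ false (arrE (a, α))) :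
    a ≠ 0 ∧ ¬ OccQ false α ∧ ∀ β ∈ a, ¬ OccQ true β := by
  simpa [occQ_arrE_iff] using h

def mkE (t : PreE) : ETy := Quotient.mk ESetoid t

lemma mkE_out (x : ETy) : mkE x.out = x := Quotient.out_eq x

def arrowParts : PreE → Option (Multiset ETy × ETy)
  | .atom _ => none
  | .node l t => some (↑(l.map mkE), mkE t)

lemma EqvE.arrowParts_eq {s t : PreE} (h : EqvE s t) : arrowParts s = arrowParts t := by
  induction h with
  | refl => rfl
  | symm _ ih => exact ih.symm
  | trans _ _ ih₁ ih₂ => exact ih₁.trans ih₂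
  | perm hp => simp [arrowParts, Multiset.coe_eq_coe.mpr (hp.map mkE)]
  | congHead h => simp [arrowParts, show mkE _ = mkE _ from Quot.sound h]
  | congArg h => simp [arrowParts, show mkE _ = mkE _ from Quot.sound h]

lemma arrowParts_arrE (p : Multiset ETy × ETy) :
    Quotient.lift arrowParts (fun _ _ => EqvE.arrowParts_eq) (arrE p) = some p := by
  have map_out (l : List ETy) : (l.map Quotient.out).map mkE = l := by
    induction l with
    | nil => rfl
    | cons x l ih => exact congrArg₂ List.cons (mkE_out x) ih
  show arrowParts (.node _ _) = _
  simp [arrowParts, map_out, mkE_out]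

lemma arrE_injective : Function.Injective arrE := fun p q h =>
  Option.some_injective _ (by rw [← arrowParts_arrE p, h, arrowParts_arrE])

end ModelE

section Normalization

open Relation

variable {n : ℕ}

def IsNormal (N : Tm n) : Prop := ∀ P, ¬ Beta N P

def NotLam : Tm n → Prop
  | .lam _ => False
  | _ => True

lemma lam_or_notLam (M : Tm n) : (∃ R, M = .lam R) ∨ NotLam M := by
  cases M <;> simp [NotLam]

lemma isNormal_var (k : Fin n) : IsNormal (.var k) := fun _ h => by cases h

lemma IsNormal.lam {M : Tm (n + 1)} (h : IsNormal M) : IsNormal (.lam M) := by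
  intro _ hP
  cases hP with
  | lam hM => exact h _ hM

lemma IsNormal.app {M N : Tm n} (hM : IsNormal M) (hN : IsNormal N) (hlam : NotLam M) :
    IsNormal (.app M N) := by
  intro _ hP
  cases hP with
  | redex => exact hlam
  | appL h => exact hM _ h
  | appR h => exact hN _ h

/-- `∅ ∉⁻ Γ`. -/
def NegFree (Γ : Fin n → Multiset ETy) : Prop := ∀ k, ∀ β ∈ Γ k, ¬ OccQ false β

lemma NegFree.mono {Γ Δ : Fin n → Multiset ETy} (h : NegFree Γ) (hle : Δ ≤ Γ) : NegFree Δ :=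
  fun k β hβ => h k β (Multiset.mem_of_le (hle k) hβ)

lemma NegFree.cons {Γ : Fin n → Multiset ETy} {a : Multiset ETy} (h : NegFree Γ)
    (ha : ∀ β ∈ a, ¬ OccQ false β) : NegFree (Fin.cons a Γ) :=
  fun k => Fin.cases ha h k

def HasNF (M : Tm n) : Prop := ∃ N, BotFree N ∧ ReflTransGen Beta M N ∧ IsNormal N

def NormalizesAt (m : ℕ) : Prop :=
  ∀ {n : ℕ} (M : Tm n) (Γ : Fin n → Multiset ETy) (α : ETy),
    Der arrE Γ M α m → ¬ OccQ true α → NegFree Γ → HasNF M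

theorem Der.reduces_or_neutral {m : ℕ} (IH : ∀ m' < m, NormalizesAt m')
    {Γ : Fin n → Multiset ETy} {M : Tm n} {δ : ETy} (hd : Der arrE Γ M δ m) (hM : NotLam M)
    (hΓ : NegFree Γ) :
    (∃ M' m', Beta M M' ∧ Der arrE Γ M' δ m' ∧ m' < m) ∨
      ¬ OccQ false δ ∧ ∃ N, NotLam N ∧ BotFree N ∧ ReflTransGen Beta M N ∧ IsNormal N := by
  induction M generalizing m δ with
  | var k =>
    cases hd
    exact .inr ⟨hΓ k δ (by simp [single]), .var k, trivial, trivial, .refl, isNormal_var k⟩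
  | lam => exact hM.elim
  | bot => cases hd
  | app P Q ihP =>
    rcases lam_or_notLam P with ⟨R, rfl⟩ | hP
    · obtain ⟨m', hm', hd'⟩ := Der.subst1_of_app_lam arrE_injective hd
      exact .inl ⟨_, m', .redex R Q, hd', hm'⟩
    cases hd with
    | app l hPd hQd =>
    rcases ihP (fun m' hm' => IH m' (by omega)) hPd hP (hΓ.mono le_self_add) with
      ⟨P', mP', hstep, hPd', hlt⟩ | ⟨hδ, NP, hNP, hbotP, hPN, hnfP⟩
    · exact .inl ⟨.app P' Q, _, .appL hstep, .app l hPd' hQd, by omega⟩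
    obtain ⟨hne, hδ, hargs⟩ := not_occQ_false_arrE hδ
    obtain ⟨β, hβ⟩ := Multiset.exists_mem_of_ne_zero hne
    obtain ⟨q, hq, rfl⟩ := List.mem_map.mp (Multiset.mem_coe.mp hβ)
    have hmq := List.le_sum_of_mem (List.mem_map_of_mem (f := fun q => q.2.2) hq)
    have hΓq := List.le_sum_of_mem (List.mem_map_of_mem (f := fun q => q.1) hq)
    obtain ⟨NQ, hbotQ, hQN, hnfQ⟩ := IH q.2.2 (by omega) Q q.1 q.2.1 (hQd q hq) (hargs _ hβ)
      (hΓ.mono (hΓq.trans le_add_self))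
    have hPN' : ReflTransGen Beta (.app P Q) (.app NP Q) := hPN.lift (·.app Q) fun _ _ => .appL
    have hQN' : ReflTransGen Beta (.app NP Q) (.app NP NQ) := hQN.lift (Tm.app NP) fun _ _ => .appR
    exact .inr ⟨hδ, .app NP NQ, trivial, ⟨hbotP, hbotQ⟩, hPN'.trans hQN', hnfP.app hnfQ hNP⟩

theorem normalizesAt (m : ℕ) : NormalizesAt m := by
  induction m using Nat.strong_induction_on with
  | _ m IH =>
  intro n M
  induction M with
  | var k => exact fun _ _ _ _ _ => ⟨.var k, trivial, .refl, isNormal_var k⟩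
  | lam M ih =>
    intro Γ α hd hα hΓ
    cases hd with
    | lam hd =>
    obtain ⟨hα, ha⟩ := not_occQ_true_arrE hα
    obtain ⟨N, hN, hMN, hnf⟩ := ih _ _ hd hα (hΓ.cons ha)
    exact ⟨.lam N, hN, hMN.lift Tm.lam fun _ _ => .lam, hnf.lam⟩
  | bot => intro _ _ hd; cases hd
  | app P Q =>
    intro Γ α hd hα hΓ
    rcases hd.reduces_or_neutral IH trivial hΓ with
      ⟨M', m', hstep, hd', hm'⟩ | ⟨-, N, -, hN, hMN, hnf⟩
    · obtain ⟨N, hN, hMN, hnf⟩ := IH m' hm' M' Γ α hd' hα hΓ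
      exact ⟨N, hN, .head hstep hMN, hnf⟩
    · exact ⟨N, hN, hMN, hnf⟩

end Normalization

theorem stmt_16_general {n : ℕ} (M : Tm n)
    {Γ : Fin n → Multiset ETy} {α : ETy} {m : ℕ}
    (hd : Der arrE Γ M α m) (hα : ¬ OccQ true α)
    (hΓ : ∀ (k : Fin n), ∀ β ∈ Γ k, ¬ OccQ false β) :
    ∃ N : Tm n, BotFree N ∧
      Relation.EqvGen (fun a b : Tm n => Beta a b) M N ∧ ∀ P, ¬ Beta N P := by
  obtain ⟨N, hN, hMN, hnf⟩ := normalizesAt m M Γ α hd hα hΓ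
  exact ⟨N, hN, Relation.EqvGen.reflTransGen_le_eqvGen _ _ _ hMN, hnf⟩

/-- Conversely, if a λ-term is typable in `E` with a type in which the empty multiset
does not occur positively and an environment in whose types the empty multiset does not
occur negatively, then it is β-normalizable. -/
theorem stmt_16 {n : ℕ} (M : Tm n) (hM : BotFree M)
    {Γ : Fin n → Multiset ETy} {α : ETy} {m : ℕ}
    (hd : Der arrE Γ M α m) (hα : ¬ OccQ true α)
    (hΓ : ∀ (k : Fin n), ∀ β ∈ Γ k, ¬ OccQ false β) :
    ∃ N : Tm n, BotFree N ∧
      Relation.EqvGen (fun a b : Tm n => Beta a b) M N ∧ ∀ P, ¬ Beta N P :=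
  stmt_16_general M hd hα hΓ
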